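/- arXiv:2503.11833 — 5 statements merged into one kernel-verified Lean document; each statement's English description precedes it below -/
import Mathlib

section
/- Let {a_t}_{t=0}^∞ and {b_t}_{t=0}^∞ be two sequences of non-negative real numbers. Assume that the series ∑_{t=0}^∞ a_t b_t converges, that the series ∑_{t=0}^∞ a_t diverges, and that there exists a constant L ≥ 0 such that |b_{t+1} − b_t| ≤ L·a_t for all t ≥ 0. Then lim_{t→∞} b_t = 0. -/
/-!
Since `∑ aₜ` diverges while `∑ aₜbₜ` converges, `b` drops below any `c > 0` infinitely often.
While `b` stays above `c`, each decrease `bₜ - bₜ₊₁ ≤ L aₜ ≤ (L / c) aₜbₜ` is paid for by the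
convergent series, so from a late index `n` the sequence can never climb far above `c` before
its next visit below `c`: `bₙ ≤ c + (L / c) · (tail of ∑ aₜbₜ from n)`.
-/

open Filter Finset

theorem frequently_lt_of_summable_mul_of_not_summable {a b : ℕ → ℝ} (ha : ∀ t, 0 ≤ a t)
    (hab : Summable fun t => a t * b t) (ha' : ¬Summable a) {c : ℝ} (hc : 0 < c) :
    ∃ᶠ t in atTop, b t < c := by
  by_contra h
  simp only [not_frequently, not_lt] at h
  refine ha' <| .of_norm_bounded_eventually_nat (hab.div_const c) (h.mono fun t hct => ?_)
  rw [Real.norm_of_nonneg (ha t), le_div_iff₀ hc]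
  exact mul_le_mul_of_nonneg_left hct (ha t)

theorem le_add_div_mul_sum_of_sub_succ_le {a b : ℕ → ℝ} {L c : ℝ} (ha : ∀ t, 0 ≤ a t)
    (hb : ∀ t, 0 ≤ b t) (hL : 0 ≤ L) (hc : 0 < c) (hdec : ∀ t, b t - b (t + 1) ≤ L * a t)
    {n k : ℕ} (hk : b (n + k) ≤ c) :
    b n ≤ c + L / c * ∑ i ∈ range k, a (i + n) * b (i + n) := by
  induction k generalizing n with
  | zero => simpa using hk
  | succ k ih =>
    have hsum_nonneg : 0 ≤ L / c * ∑ i ∈ range (k + 1), a (i + n) * b (i + n) :=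
      mul_nonneg (div_nonneg hL hc.le) (sum_nonneg fun i _ => mul_nonneg (ha _) (hb _))
    rcases le_or_gt (b n) c with hbn | hbn
    · linarith
    have hnext := ih (n := n + 1) (by rwa [Nat.add_right_comm])
    have hstep : L * a n ≤ L / c * (a n * b n) := by
      rw [div_mul_eq_mul_div, le_div_iff₀ hc, mul_assoc]
      exact mul_le_mul_of_nonneg_left (mul_le_mul_of_nonneg_left hbn.le (ha n)) hL
    rw [sum_range_succ', mul_add]
    simp only [zero_add, add_assoc, Nat.add_comm 1 n] at hnext ⊢
    linarith [hdec n]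

/-- If `a`, `b` are sequences of non-negative reals, `∑ aₜbₜ` converges,
`∑ aₜ` diverges (partial sums tend to infinity), and `|b_{t+1} - bₜ| ≤ L·aₜ`
for some `L ≥ 0`, then `bₜ → 0`. -/
theorem stmt_0 (a b : ℕ → ℝ) (ha : ∀ t, 0 ≤ a t) (hb : ∀ t, 0 ≤ b t)
    (hconv : Summable (fun t => a t * b t))
    (hdiv : Tendsto (fun T => ∑ t ∈ Finset.range T, a t) atTop atTop)
    (L : ℝ) (hL : 0 ≤ L) (hLa : ∀ t, |b (t + 1) - b t| ≤ L * a t) :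
    Tendsto b atTop (nhds 0) := by
  have hdec (t : ℕ) : b t - b (t + 1) ≤ L * a t := by
    simpa only [neg_sub] using (neg_le_abs _).trans (hLa t)
  refine tendsto_order.2 ⟨fun x hx => .of_forall fun n => hx.trans_le (hb n), fun ε hε => ?_⟩
  have hc : 0 < ε / 2 := half_pos hε
  have hfreq := frequently_lt_of_summable_mul_of_not_summable ha hconv
    ((not_summable_iff_tendsto_nat_atTop_of_nonneg ha).2 hdiv) hc
  have htail : ∀ᶠ n in atTop, L / (ε / 2) * ∑' i, a (i + n) * b (i + n) < ε / 2 := by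
    refine ((tendsto_sum_nat_add fun i => a i * b i).const_mul _).eventually_lt_const ?_
    simpa using hc
  filter_upwards [htail] with n hn
  obtain ⟨m, hnm, hbm⟩ := frequently_atTop.1 hfreq n
  obtain ⟨k, rfl⟩ := Nat.exists_eq_add_of_le hnm
  have hpartial : ∑ i ∈ range k, a (i + n) * b (i + n) ≤ ∑' i, a (i + n) * b (i + n) :=
    Summable.sum_le_tsum _ (fun i _ => mul_nonneg (ha _) (hb _)) ((summable_nat_add_iff n).2 hconv)
  calc b n ≤ ε / 2 + L / (ε / 2) * ∑ i ∈ range k, a (i + n) * b (i + n) :=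
        le_add_div_mul_sum_of_sub_succ_le ha hb hL hc hdec hbm.le
    _ ≤ ε / 2 + L / (ε / 2) * ∑' i, a (i + n) * b (i + n) := by
        gcongr
    _ < ε := by linarith
end

section
/- Let a_0 > 1, let a_t ≥ 0 for t = 1, …, T, and let b > 1. Then ∑_{t=1}^T a_t / (a_0 + ∑_{i=1}^t a_i)^b ≤ 1 / ((b−1)·a_0^{b−1}). -/
/-!
With `S t = a 0 + ∑_{i=1}^t a i`, the sum is a lower Riemann sum of `∫ x ^ (-b)` over
`[a 0, ∞)`: by Bernoulli's inequality the `t`-th term is at most the integral over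
`[S (t-1), S t]`, i.e. `(S (t-1) ^ (1 - b) - S t ^ (1 - b)) / (b - 1)`, and these bounds telescope to at most
`a 0 ^ (1 - b) / (b - 1)`.
-/

open Real Finset

lemma div_rpow_add_le_sub_rpow_div {s c b : ℝ} (hs : 0 < s) (hc : 0 ≤ c) (hb : 1 < b) :
    c / (s + c) ^ b ≤ (s ^ (1 - b) - (s + c) ^ (1 - b)) / (b - 1) := by
  have hsc : 0 < s + c := by positivity
  have bernoulli : s + b * c ≤ s ^ (1 - b) * (s + c) ^ b := by
    have h := one_add_mul_self_le_rpow_one_add (s := c / s)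
      (by linarith [div_nonneg hc hs.le]) hb.le
    calc s + b * c = s * (1 + b * (c / s)) := by field_simp
      _ ≤ s * (1 + c / s) ^ b := by gcongr
      _ = s ^ (1 - b) * (s + c) ^ b := by
        rw [one_add_div hs.ne', div_rpow hsc.le hs.le, rpow_sub hs, rpow_one]
        field_simp
  have hcancel : (s + c) ^ (1 - b) * (s + c) ^ b = s + c := by
    rw [← rpow_add hsc]
    simp
  rw [div_le_div_iff₀ (by positivity) (by linarith)]
  linarith

lemma sum_div_rpow_partialSum_le {a₀ b : ℝ} (ha₀ : 0 < a₀) (hb : 1 < b) {a : ℕ → ℝ} {T : ℕ}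
    (ha : ∀ t, 1 ≤ t → t ≤ T → 0 ≤ a t) :
    ∑ t ∈ Icc 1 T, a t / (a₀ + ∑ i ∈ Icc 1 t, a i) ^ b
      ≤ (a₀ ^ (1 - b) - (a₀ + ∑ i ∈ Icc 1 T, a i) ^ (1 - b)) / (b - 1) := by
  induction T with
  | zero => simp
  | succ T ih =>
    have hpos : 0 < a₀ + ∑ i ∈ Icc 1 T, a i :=
      add_pos_of_pos_of_nonneg ha₀ <| sum_nonneg fun i hi ↦ by
        rw [mem_Icc] at hi
        exact ha i hi.1 (by omega)
    have hstep := div_rpow_add_le_sub_rpow_div hpos (ha (T + 1) (by omega) le_rfl) hb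
    rw [sum_Icc_succ_top (by omega), sum_Icc_succ_top (by omega), ← add_assoc]
    refine (add_le_add (ih fun t h1 h2 ↦ ha t h1 (by omega)) hstep).trans_eq ?_
    ring

theorem stmt_1_general (T : ℕ) (a : ℕ → ℝ) (ha0 : 1 < a 0)
    (ha : ∀ t, 1 ≤ t → t ≤ T → 0 ≤ a t) (b : ℝ) (hb : 1 < b) :
    ∑ t ∈ Finset.Icc 1 T, a t / (a 0 + ∑ i ∈ Finset.Icc 1 t, a i) ^ b
      ≤ 1 / ((b - 1) * a 0 ^ (b - 1)) := by
  have ha0_pos : 0 < a 0 := by linarith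
  have htail : 0 ≤ (a 0 + ∑ i ∈ Icc 1 T, a i) ^ (1 - b) := by
    refine rpow_nonneg (add_nonneg ha0_pos.le (sum_nonneg fun i hi ↦ ?_)) _
    rw [mem_Icc] at hi
    exact ha i hi.1 hi.2
  calc _ ≤ (a 0 ^ (1 - b) - (a 0 + ∑ i ∈ Icc 1 T, a i) ^ (1 - b)) / (b - 1) :=
        sum_div_rpow_partialSum_le ha0_pos hb ha
    _ ≤ a 0 ^ (1 - b) / (b - 1) := by gcongr; linarith
    _ = 1 / ((b - 1) * a 0 ^ (b - 1)) := by
        rw [show 1 - b = -(b - 1) by ring, rpow_neg ha0_pos.le]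
        field_simp

/-- If `a 0 > 1`, `a t ≥ 0` for `t = 1, …, T` and `b > 1`, then
`∑_{t=1}^T a t / (a 0 + ∑_{i=1}^t a i)^b ≤ 1 / ((b-1) * (a 0)^(b-1))`. -/
theorem stmt_1 (T : ℕ) (hT : 0 < T) (a : ℕ → ℝ) (ha0 : 1 < a 0)
    (ha : ∀ t, 1 ≤ t → t ≤ T → 0 ≤ a t) (b : ℝ) (hb : 1 < b) :
    ∑ t ∈ Finset.Icc 1 T, a t / (a 0 + ∑ i ∈ Finset.Icc 1 t, a i) ^ b
      ≤ 1 / ((b - 1) * a 0 ^ (b - 1)) :=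
  stmt_1_general T a ha0 ha b hb
end

section
/- Let α > 0, β > 0, 0 < ε ≤ 1/2, G₁ ≥ 0, and let {g_t}_{t=0}^∞ be a sequence of real numbers with 0 ≤ g_t ≤ G₁ for all t. Define adaptive step sizes η_t = α / (β + ∑_{s=0}^{t−1} g_s²)^{(1/2)+ε} for t ≥ 0 (with the empty sum equal to 0 when t = 0). Then ∑_{t=0}^∞ η_t² g_t² ≤ α²/(2ε·β^{2ε}) + G₁²·α²/β^{1+2ε}; in particular, the series ∑_{t=0}^∞ η_t² g_t² converges. -/
/-!
Write `S t = β + ∑_{s<t} g s ^ 2`, so that `η t ^ 2 * g t ^ 2 = α ^ 2 * g t ^ 2 * S t ^ (-(1 + 2ε))`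
and `S (t + 1) = S t + g t ^ 2`. With `p = 2ε`, the mean value theorem for `x ↦ x ^ (-p)` gives
`g t ^ 2 * S (t + 1) ^ (-(1 + p)) ≤ (S t ^ (-p) - S (t + 1) ^ (-p)) / p`, and the error of
replacing `S (t + 1)` by `S t` is at most `G₁ ^ 2 * (S t ^ (-(1 + p)) - S (t + 1) ^ (-(1 + p)))`.
Hence every term is bounded by the decrease of the nonnegative potential
`S t ^ (-p) / p + G₁ ^ 2 * S t ^ (-(1 + p))`, and the series telescopes to at most its value at `t = 0`.
-/

open Real Finset

lemma mul_sub_mul_rpow_neg_le_rpow_neg_sub_rpow_neg {p x y : ℝ} (hp : 0 < p) (hx : 0 < x)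
    (hxy : x ≤ y) : p * (y - x) * y ^ (-(1 + p)) ≤ x ^ (-p) - y ^ (-p) := by
  rcases hxy.eq_or_lt with rfl | hlt
  · simp
  have hderiv : ∀ c ∈ Set.Ioo x y, HasDerivAt (fun u : ℝ => u ^ (-p)) (-p * c ^ (-(1 + p))) c :=
    fun c hc => by
      convert hasDerivAt_rpow_const (p := -p) (Or.inl (hx.trans hc.1).ne') using 2
      ring_nf
  have hcont : ContinuousOn (fun u : ℝ => u ^ (-p)) (Set.Icc x y) :=
    fun u hu => (continuousAt_rpow_const _ _ (Or.inl (hx.trans_le hu.1).ne')).continuousWithinAt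
  obtain ⟨c, hc, hslope⟩ := exists_hasDerivAt_eq_slope _ _ hlt hcont hderiv
  have hyx : 0 < y - x := sub_pos.2 hlt
  have hcy : y ^ (-(1 + p)) ≤ c ^ (-(1 + p)) :=
    rpow_le_rpow_of_nonpos (hx.trans hc.1) hc.2.le (by linarith)
  rw [eq_div_iff hyx.ne'] at hslope
  nlinarith [mul_nonneg (mul_nonneg hp.le hyx.le) (sub_nonneg.2 hcy)]

lemma mul_rpow_neg_le_sub_of_le {p x a A : ℝ} (hp : 0 < p) (hx : 0 < x) (ha : 0 ≤ a)
    (haA : a ≤ A) :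
    a * x ^ (-(1 + p)) ≤
      (x ^ (-p) / p + A * x ^ (-(1 + p))) - ((x + a) ^ (-p) / p + A * (x + a) ^ (-(1 + p))) := by
  have hxa : x ≤ x + a := le_add_of_nonneg_right ha
  have hmvt := mul_sub_mul_rpow_neg_le_rpow_neg_sub_rpow_neg hp hx hxa
  rw [add_sub_cancel_left] at hmvt
  have hdecr : (x + a) ^ (-(1 + p)) ≤ x ^ (-(1 + p)) :=
    rpow_le_rpow_of_nonpos hx hxa (by linarith)
  have hnext : a * (x + a) ^ (-(1 + p)) ≤ (x ^ (-p) - (x + a) ^ (-p)) / p := by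
    rw [le_div_iff₀ hp]; linarith
  have herr : a * (x ^ (-(1 + p)) - (x + a) ^ (-(1 + p))) ≤
      A * (x ^ (-(1 + p)) - (x + a) ^ (-(1 + p))) :=
    mul_le_mul_of_nonneg_right haA (sub_nonneg.2 hdecr)
  calc a * x ^ (-(1 + p))
      = a * (x + a) ^ (-(1 + p)) + a * (x ^ (-(1 + p)) - (x + a) ^ (-(1 + p))) := by ring
    _ ≤ (x ^ (-p) - (x + a) ^ (-p)) / p + A * (x ^ (-(1 + p)) - (x + a) ^ (-(1 + p))) :=
      add_le_add hnext herr
    _ = _ := by ring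

lemma summable_and_tsum_le_of_le_sub_succ {u f : ℕ → ℝ} (hu : ∀ t, 0 ≤ u t) (hf : ∀ t, 0 ≤ f t)
    (huf : ∀ t, u t ≤ f t - f (t + 1)) : Summable u ∧ ∑' t, u t ≤ f 0 := by
  have hpartial : ∀ n, ∑ t ∈ range n, u t ≤ f 0 := fun n =>
    calc ∑ t ∈ range n, u t
        ≤ ∑ t ∈ range n, (f t - f (t + 1)) := sum_le_sum fun t _ => huf t
      _ = f 0 - f n := sum_range_sub' f n
      _ ≤ f 0 := sub_le_self _ (hf n)
  exact ⟨summable_of_sum_range_le hu hpartial, tsum_le_of_sum_range_le hu hpartial⟩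

lemma summable_and_tsum_mul_rpow_neg_partialSum_le {β p A : ℝ} {a : ℕ → ℝ} (hβ : 0 < β)
    (hp : 0 < p) (ha : ∀ t, 0 ≤ a t) (haA : ∀ t, a t ≤ A) :
    Summable (fun t => a t * (β + ∑ s ∈ range t, a s) ^ (-(1 + p))) ∧
      ∑' t, a t * (β + ∑ s ∈ range t, a s) ^ (-(1 + p)) ≤
        β ^ (-p) / p + A * β ^ (-(1 + p)) := by
  set S : ℕ → ℝ := fun t => β + ∑ s ∈ range t, a s
  have hS : ∀ t, 0 < S t := fun t => add_pos_of_pos_of_nonneg hβ (sum_nonneg fun s _ => ha s)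
  have hA : 0 ≤ A := (ha 0).trans (haA 0)
  have hstep : ∀ t, S (t + 1) = S t + a t := fun t => by
    simp only [S, sum_range_succ, add_assoc]
  have h := summable_and_tsum_le_of_le_sub_succ
    (f := fun t => S t ^ (-p) / p + A * S t ^ (-(1 + p)))
    (fun t => mul_nonneg (ha t) (rpow_nonneg (hS t).le _))
    (fun t => add_nonneg (div_nonneg (rpow_nonneg (hS t).le _) hp.le)
      (mul_nonneg hA (rpow_nonneg (hS t).le _)))
    (fun t => by simp only [hstep]; exact mul_rpow_neg_le_sub_of_le hp (hS t) (ha t) (haA t))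
  simpa only [S, sum_range_zero, add_zero] using h

theorem stmt_2_general (α β ε G₁ : ℝ) (hβ : 0 < β) (hε : 0 < ε)
    (g : ℕ → ℝ) (hg : ∀ t, 0 ≤ g t) (hgG : ∀ t, g t ≤ G₁)
    (η : ℕ → ℝ)
    (hη : ∀ t, η t = α / (β + ∑ s ∈ Finset.range t, g s ^ 2) ^ ((1 : ℝ) / 2 + ε)) :
    Summable (fun t => η t ^ 2 * g t ^ 2) ∧
      ∑' t, η t ^ 2 * g t ^ 2 ≤ α ^ 2 / (2 * ε * β ^ (2 * ε)) + G₁ ^ 2 * α ^ 2 / β ^ (1 + 2 * ε) := by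
  have hterm : (fun t => η t ^ 2 * g t ^ 2) = fun t =>
      α ^ 2 * (g t ^ 2 * (β + ∑ s ∈ range t, g s ^ 2) ^ (-(1 + 2 * ε))) := by
    funext t
    have hS : 0 < β + ∑ s ∈ range t, g s ^ 2 := by positivity
    rw [hη, div_pow, ← rpow_mul_natCast hS.le, rpow_neg hS.le]
    ring_nf
  obtain ⟨hsum, hle⟩ := summable_and_tsum_mul_rpow_neg_partialSum_le (A := G₁ ^ 2) hβ
    (by positivity : 0 < 2 * ε) (fun t => sq_nonneg (g t))
    (fun t => pow_le_pow_left₀ (hg t) (hgG t) 2)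
  refine ⟨hterm ▸ hsum.mul_left _, ?_⟩
  rw [hterm, tsum_mul_left]
  calc α ^ 2 * ∑' t, g t ^ 2 * (β + ∑ s ∈ range t, g s ^ 2) ^ (-(1 + 2 * ε))
      ≤ α ^ 2 * (β ^ (-(2 * ε)) / (2 * ε) + G₁ ^ 2 * β ^ (-(1 + 2 * ε))) :=
        mul_le_mul_of_nonneg_left hle (sq_nonneg α)
    _ = _ := by
        rw [rpow_neg hβ.le, rpow_neg hβ.le]
        field_simp

/-- With adaptive step sizes `η t = α / (β + ∑_{s<t} g s ^ 2) ^ (1/2 + ε)` and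
`0 ≤ g t ≤ G₁`, the series `∑ η t ^ 2 * g t ^ 2` converges and its sum is at most
`α²/(2εβ^{2ε}) + G₁²α²/β^{1+2ε}`. -/
theorem stmt_2 (α β ε G₁ : ℝ) (hα : 0 < α) (hβ : 0 < β) (hε : 0 < ε) (hε' : ε ≤ 1 / 2)
    (hG₁ : 0 ≤ G₁) (g : ℕ → ℝ) (hg : ∀ t, 0 ≤ g t) (hgG : ∀ t, g t ≤ G₁)
    (η : ℕ → ℝ)
    (hη : ∀ t, η t = α / (β + ∑ s ∈ Finset.range t, g s ^ 2) ^ ((1 : ℝ) / 2 + ε)) :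
    Summable (fun t => η t ^ 2 * g t ^ 2) ∧
      ∑' t, η t ^ 2 * g t ^ 2 ≤ α ^ 2 / (2 * ε * β ^ (2 * ε)) + G₁ ^ 2 * α ^ 2 / β ^ (1 + 2 * ε) :=
  stmt_2_general α β ε G₁ hβ hε g hg hgG η hη
end

section
/- Let c ∈ ℝ and a ∈ ℝ with c² ≤ a, let λ ≥ 0, let x, u, v ∈ ℝ^k, and set p = ∑_{l=1}^k u_l x_l v_l. Then ∑_{l=1}^k 2x_l·(−2(c − p)·u_l v_l + 2λ x_l) = −4(c − p)·p + 4λ‖x‖², and this quantity is bounded below: −4(c − p)·p + 4λ‖x‖² ≥ −a + 4λ‖x‖². In particular, this inner product is non-negative whenever ‖x‖² ≥ a/(4λ) (for λ > 0). -/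
/-- With `p = ∑ l, u l * x l * v l`, the inner product of the gradient of
`ρ = ‖x‖²` with the gradient of `g = (c - p)² + λ‖x‖²` equals
`-4(c - p)p + 4λ‖x‖²`, which is bounded below by `-a + 4λ‖x‖²` when `c² ≤ a`;
in particular it is non-negative whenever `‖x‖² ≥ a/(4λ)` (for `λ > 0`). -/
theorem stmt_11 (k : ℕ) (c a : ℝ) (hc : c ^ 2 ≤ a) (lam : ℝ) (hlam : 0 ≤ lam)
    (x : EuclideanSpace ℝ (Fin k)) (u v : Fin k → ℝ)
    (p : ℝ) (hp : p = ∑ l, u l * x l * v l) :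
    (∑ l, 2 * x l * (-2 * (c - p) * u l * v l + 2 * lam * x l)
        = -4 * (c - p) * p + 4 * lam * ‖x‖ ^ 2) ∧
      -4 * (c - p) * p + 4 * lam * ‖x‖ ^ 2 ≥ -a + 4 * lam * ‖x‖ ^ 2 ∧
      (0 < lam → a / (4 * lam) ≤ ‖x‖ ^ 2 →
        0 ≤ -4 * (c - p) * p + 4 * lam * ‖x‖ ^ 2) := by
  have hn : ‖x‖ ^ 2 = ∑ l, x l ^ 2 := by
    rw [EuclideanSpace.norm_eq]
    rw [Real.sq_sqrt (by positivity)]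
    simp [sq_abs, sq]
  have key : -4 * (c - p) * p ≥ -a := by
    nlinarith [sq_nonneg (c - 2 * p)]
  refine ⟨?_, by linarith, ?_⟩
  · rw [hn, hp, Finset.mul_sum, Finset.mul_sum, ← Finset.sum_add_distrib]
    apply Finset.sum_congr rfl
    intro l _
    ring
  · intro hl hx
    have : a ≤ 4 * lam * ‖x‖ ^ 2 := by
      rw [div_le_iff₀ (by positivity)] at hx
      linarith
    linarith
end

section
/- Let k be a positive integer, c ∈ ℝ and a ∈ ℝ with c² ≤ a, λ ≥ 0, κ ≥ 0, x ∈ ℝ^k, p ∈ ℝ with p² ≤ ‖x‖², and u, v ∈ ℝ^k with |u_l| ≤ 1 and |v_l| ≤ 1 for every l. If −a + 4λ‖x‖² ≥ 8κ·(2k·a + 2k·‖x‖² + λ²·‖x‖²), then −4(c − p)·p + 4λ‖x‖² ≥ 4κ·∑_{l=1}^k ((c − p)·u_l v_l − λ x_l)². -/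
/-- If `-a + 4λ‖x‖² ≥ 8κ(2ka + 2k‖x‖² + λ²‖x‖²)`, with `c² ≤ a`, `p² ≤ ‖x‖²`,
`λ, κ ≥ 0` and `|u l| ≤ 1`, `|v l| ≤ 1`, then
`-4(c-p)p + 4λ‖x‖² ≥ 4κ ∑ l, ((c-p)·u l·v l - λ·x l)²`. -/
theorem stmt_13 (k : ℕ) (hk : 0 < k) (c a : ℝ) (hc : c ^ 2 ≤ a)
    (lam : ℝ) (hlam : 0 ≤ lam) (κ : ℝ) (hκ : 0 ≤ κ)
    (x : EuclideanSpace ℝ (Fin k)) (p : ℝ) (hp : p ^ 2 ≤ ‖x‖ ^ 2)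
    (u v : Fin k → ℝ) (hu : ∀ l, |u l| ≤ 1) (hv : ∀ l, |v l| ≤ 1)
    (h : -a + 4 * lam * ‖x‖ ^ 2 ≥ 8 * κ * (2 * k * a + 2 * k * ‖x‖ ^ 2 + lam ^ 2 * ‖x‖ ^ 2)) :
    -4 * (c - p) * p + 4 * lam * ‖x‖ ^ 2
      ≥ 4 * κ * ∑ l, ((c - p) * u l * v l - lam * x l) ^ 2 := by
  have hx : ‖x‖ ^ 2 = ∑ l, x l ^ 2 := by
    rw [EuclideanSpace.norm_eq, Real.sq_sqrt (by positivity)]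
    simp [sq_abs]
  have hterm : ∀ l, ((c - p) * u l * v l - lam * x l) ^ 2
      ≤ 2 * (c - p) ^ 2 + 2 * lam ^ 2 * x l ^ 2 := by
    intro l
    have hu1 : u l ^ 2 ≤ 1 := by
      have := hu l; nlinarith [sq_abs (u l), abs_nonneg (u l)]
    have hv1 : v l ^ 2 ≤ 1 := by
      have := hv l; nlinarith [sq_abs (v l), abs_nonneg (v l)]
    nlinarith [sq_nonneg ((c - p) * u l * v l + lam * x l), sq_nonneg (c - p),
      sq_nonneg (u l * v l), mul_nonneg (sq_nonneg (c - p)) (sq_nonneg (v l)),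
      sq_nonneg (lam * x l)]
  have hS : ∑ l, ((c - p) * u l * v l - lam * x l) ^ 2
      ≤ (k : ℝ) * (2 * (c - p) ^ 2) + 2 * lam ^ 2 * ‖x‖ ^ 2 := by
    calc ∑ l, ((c - p) * u l * v l - lam * x l) ^ 2
        ≤ ∑ l : Fin k, (2 * (c - p) ^ 2 + 2 * lam ^ 2 * x l ^ 2) :=
          Finset.sum_le_sum fun l _ => hterm l
      _ = (k : ℝ) * (2 * (c - p) ^ 2) + 2 * lam ^ 2 * ‖x‖ ^ 2 := by
          rw [Finset.sum_add_distrib, Finset.sum_const, ← Finset.mul_sum, hx]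
          simp [mul_comm]
  have hcp : (c - p) ^ 2 ≤ 2 * a + 2 * ‖x‖ ^ 2 := by nlinarith [sq_nonneg (c + p)]
  have hcpp : 4 * (c - p) * p ≤ a := by nlinarith [sq_nonneg (c - 2 * p)]
  have hk0 : (0 : ℝ) ≤ (k : ℝ) := Nat.cast_nonneg k
  have hS2 : ∑ l, ((c - p) * u l * v l - lam * x l) ^ 2
      ≤ 2 * (2 * k * a + 2 * k * ‖x‖ ^ 2 + lam ^ 2 * ‖x‖ ^ 2) := by
    have := mul_le_mul_of_nonneg_left hcp (by positivity : (0:ℝ) ≤ 2 * (k : ℝ))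
    nlinarith
  nlinarith [mul_le_mul_of_nonneg_left hS2 hκ]
end
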